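/- arXiv:1505.04920 — 8 statements merged into one kernel-verified Lean document; each statement's English description precedes it below -/
import Mathlib

section
/- The Friedkin–Johnsen model x(k+1) = ΛW x(k) + (I_n − Λ)u is exponentially stable, i.e. the matrix ΛW is Schur stable (ρ(ΛW) < 1), if and only if there are no oblivious agents, i.e. every agent i ∈ {1,…,n} is either stubborn or is connected by a walk in the interaction graph G[W] to some stubborn agent. -/
/-!
If agent `i` is oblivious, the agents reachable from `i` in `G[W]` form a closed set of
non-stubborn agents, so `ΛW` is block triangular with a row-stochastic diagonal block, and `1` is
an eigenvalue. Conversely, `ΛW` is substochastic, so the row sums of its powers are nonincreasing,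
and a row sum `< 1` of `(ΛW)^k` at an agent `j` forces a row sum `< 1` of `(ΛW)^(k+1)` at every
`i` with `w_ij > 0`. If every agent reaches a stubborn one, some power `(ΛW)^K` therefore has all
row sums `< 1`, and Gershgorin's theorem gives `|z|^K < 1` for every eigenvalue `z` of `ΛW`.
-/

open Matrix

/-- Spectral radius of a real matrix: the supremum of moduli of its complex eigenvalues. -/
noncomputable def specRad {ι : Type*} [Fintype ι] [DecidableEq ι] (A : Matrix ι ι ℝ) : ℝ :=
  sSup ((fun z : ℂ => ‖z‖) '' spectrum ℂ (A.map (algebraMap ℝ ℂ)))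

variable {ι : Type*} [Fintype ι] [DecidableEq ι]

theorem specRad_lt_one_iff (A : Matrix ι ι ℝ) :
    specRad A < 1 ↔ ∀ z ∈ spectrum ℂ (A.map (algebraMap ℝ ℂ)), ‖z‖ < 1 := by
  rw [specRad]
  set B := A.map (algebraMap ℝ ℂ)
  rcases (spectrum ℂ B).eq_empty_or_nonempty with hempty | hne
  · simp [hempty]
  · rw [((Matrix.finite_spectrum B).image _).csSup_lt_iff (hne.image _), Set.forall_mem_image]

theorem Matrix.exists_norm_le_sum_norm_of_mem_spectrum {K : Type*} [NormedField K]
    {M : Matrix ι ι K} {z : K} (hz : z ∈ spectrum K M) : ∃ i, ‖z‖ ≤ ∑ j, ‖M i j‖ := by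
  rw [← Matrix.spectrum_toLin', ← Module.End.hasEigenvalue_iff_mem_spectrum] at hz
  obtain ⟨i, hi⟩ := eigenvalue_mem_ball hz
  rw [Metric.mem_closedBall, dist_eq_norm] at hi
  refine ⟨i, ?_⟩
  calc ‖z‖ ≤ ‖M i i‖ + ‖z - M i i‖ := norm_le_norm_add_norm_sub' z (M i i)
    _ ≤ ‖M i i‖ + ∑ j ∈ Finset.univ.erase i, ‖M i j‖ := by gcongr
    _ = ∑ j, ‖M i j‖ := Finset.add_sum_erase _ (fun j => ‖M i j‖) (Finset.mem_univ i)

theorem Matrix.algebraMap_mem_spectrum_map_iff {K L : Type*} [Field K] [Field L] [Algebra K L]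
    (A : Matrix ι ι K) (r : K) :
    algebraMap K L r ∈ spectrum L (A.map (algebraMap K L)) ↔ r ∈ spectrum K A := by
  rw [mem_spectrum_iff_isRoot_charpoly, mem_spectrum_iff_isRoot_charpoly, charpoly_map,
    Polynomial.IsRoot.def, Polynomial.eval_map_algebraMap, Polynomial.aeval_algebraMap_apply,
    FaithfulSMul.algebraMap_eq_zero_iff, Polynomial.coe_aeval_eq_eval, Polynomial.IsRoot.def]

theorem Matrix.norm_lt_one_of_mem_spectrum_map (A : Matrix ι ι ℝ) (k : ℕ)
    (hk : ∀ i, ∑ j, |(A ^ k) i j| < 1) {z : ℂ} (hz : z ∈ spectrum ℂ (A.map (algebraMap ℝ ℂ))) :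
    ‖z‖ < 1 := by
  have hzk : z ^ k ∈ spectrum ℂ ((A ^ k).map (algebraMap ℝ ℂ)) := by
    simpa only [← RingHom.mapMatrix_apply, map_pow] using spectrum.pow_mem_pow _ k hz
  obtain ⟨i, hi⟩ := exists_norm_le_sum_norm_of_mem_spectrum hzk
  simp only [map_apply, Complex.coe_algebraMap, Complex.norm_real, Real.norm_eq_abs, norm_pow] at hi
  exact lt_of_pow_lt_pow_left₀ k zero_le_one (by simpa using hi.trans_lt (hk i))

theorem Matrix.det_eq_zero_of_sum_row_eq_zero_of_closed {R : Type*} [CommRing R] [IsDomain R]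
    {M : Matrix ι ι R} (p : ι → Prop) [DecidablePred p] {i : ι} (hi : p i)
    (hclosed : ∀ a, p a → ∀ b, ¬p b → M a b = 0) (hsum : ∀ a, p a → ∑ b, M a b = 0) :
    M.det = 0 := by
  have hblock : (toSquareBlockProp M p).det = 0 := by
    refine exists_mulVec_eq_zero_iff.mp ⟨1, Function.ne_iff.mpr ⟨⟨i, hi⟩, one_ne_zero⟩, ?_⟩
    ext a
    have hrest : ∑ b : {b // ¬p b}, M a b = 0 :=
      Finset.sum_eq_zero fun b _ => hclosed a a.2 b b.2
    rw [Pi.zero_apply, ← hsum a a.2, ← Fintype.sum_subtype_add_sum_subtype p, hrest, add_zero]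
    simp [mulVec, dotProduct, toSquareBlockProp_def]
  rw [twoBlockTriangular_det' M p hclosed, hblock, zero_mul]

theorem Matrix.sum_pow_succ_apply {R : Type*} [Semiring R] (A : Matrix ι ι R) (k : ℕ)
    (i : ι) : ∑ j, (A ^ (k + 1)) i j = ∑ m, A i m * ∑ j, (A ^ k) m j := by
  simp only [pow_succ', mul_apply, Finset.mul_sum]
  exact Finset.sum_comm

section Substochastic

variable {R : Type*} [CommRing R] [PartialOrder R] [IsOrderedRing R] {A : Matrix ι ι R}

theorem Matrix.sum_pow_apply_le_one (hA0 : ∀ i j, 0 ≤ A i j)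
    (hA1 : ∀ i, ∑ j, A i j ≤ 1) (k : ℕ) (i : ι) : ∑ j, (A ^ k) i j ≤ 1 := by
  induction k generalizing i with
  | zero => simp [one_apply]
  | succ k ih =>
    calc ∑ j, (A ^ (k + 1)) i j = ∑ m, A i m * ∑ j, (A ^ k) m j := sum_pow_succ_apply A k i
      _ ≤ ∑ m, A i m := Finset.sum_le_sum fun m _ => mul_le_of_le_one_right (hA0 i m) (ih m)
      _ ≤ 1 := hA1 i

theorem Matrix.antitone_sum_pow_apply (hA0 : ∀ i j, 0 ≤ A i j)
    (hA1 : ∀ i, ∑ j, A i j ≤ 1) (i : ι) : Antitone fun k => ∑ j, (A ^ k) i j := by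
  refine antitone_nat_of_succ_le fun k => ?_
  calc ∑ j, (A ^ (k + 1)) i j = ∑ m, (A ^ k) i m * ∑ j, A m j := by
        simp only [pow_succ, mul_apply, Finset.mul_sum]
        exact Finset.sum_comm
    _ ≤ ∑ m, (A ^ k) i m :=
        Finset.sum_le_sum fun m _ => mul_le_of_le_one_right (pow_apply_nonneg hA0 k i m) (hA1 m)

theorem Matrix.exists_forall_sum_pow_apply_lt_one (hA0 : ∀ i j, 0 ≤ A i j)
    (hA1 : ∀ i, ∑ j, A i j ≤ 1) (h : ∀ i, ∃ k, ∑ j, (A ^ k) i j < 1) :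
    ∃ k, ∀ i, ∑ j, (A ^ k) i j < 1 := by
  choose k hk using h
  exact ⟨Finset.univ.sup k, fun i =>
    (antitone_sum_pow_apply hA0 hA1 i (Finset.le_sup (Finset.mem_univ i))).trans_lt (hk i)⟩

end Substochastic

section FriedkinJohnsen

variable {W : Matrix ι ι ℝ} {lam : ι → ℝ}

theorem diagonal_mul_apply_nonneg (hW0 : ∀ i j, 0 ≤ W i j) (hlam : ∀ i, 0 ≤ lam i) (i j : ι) :
    0 ≤ (diagonal lam * W) i j := by
  simpa [diagonal_mul] using mul_nonneg (hlam i) (hW0 i j)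

theorem sum_diagonal_mul_apply (hW1 : ∀ i, ∑ j, W i j = 1) (i : ι) :
    ∑ j, (diagonal lam * W) i j = lam i := by
  simp [diagonal_mul, ← Finset.mul_sum, hW1]

theorem one_mem_spectrum_of_oblivious (hW0 : ∀ i j, 0 ≤ W i j) (hW1 : ∀ i, ∑ j, W i j = 1)
    (hlam : ∀ i, lam i ≤ 1) {i : ι} (hi : 1 ≤ lam i)
    (hobl : ∀ j, lam j < 1 → ¬Relation.TransGen (fun a b => 0 < W a b) i j) :
    (1 : ℂ) ∈ spectrum ℂ ((diagonal lam * W).map (algebraMap ℝ ℂ)) := by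
  classical
  set reachable := Relation.ReflTransGen (fun a b => 0 < W a b) i
  have hfix : ∀ a, reachable a → lam a = 1 := by
    intro a ha
    refine (hlam a).antisymm ?_
    rcases Relation.reflTransGen_iff_eq_or_transGen.mp ha with rfl | hia
    · exact hi
    · exact not_lt.mp fun hlt => hobl a hlt hia
  rw [← map_one (algebraMap ℝ ℂ), algebraMap_mem_spectrum_map_iff, spectrum.mem_iff, map_one,
    isUnit_iff_isUnit_det, isUnit_iff_ne_zero, not_not]
  refine det_eq_zero_of_sum_row_eq_zero_of_closed reachable Relation.ReflTransGen.refl ?_ ?_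
  · intro a ha b hb
    have hab : a ≠ b := fun h => hb (h ▸ ha)
    have hWab : W a b = 0 := (hW0 a b).antisymm' (not_lt.mp fun hpos => hb (ha.tail hpos))
    simp [one_apply_ne hab, diagonal_mul, hWab]
  · intro a ha
    simp [Finset.sum_sub_distrib, one_apply, diagonal_mul, hW1, hfix a ha]

theorem sum_diagonal_mul_pow_succ_apply_lt_one (hW0 : ∀ i j, 0 ≤ W i j)
    (hW1 : ∀ i, ∑ j, W i j = 1) (hlam : ∀ i, 0 ≤ lam i ∧ lam i ≤ 1) {i j : ι} (hij : 0 < W i j)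
    {k : ℕ} (hj : ∑ b, ((diagonal lam * W) ^ k) j b < 1) :
    ∑ b, ((diagonal lam * W) ^ (k + 1)) i b < 1 := by
  set A := diagonal lam * W
  have hA0 : ∀ a b, 0 ≤ A a b := diagonal_mul_apply_nonneg hW0 fun a => (hlam a).1
  have hA1 : ∀ a, ∑ b, A a b ≤ 1 := fun a => (sum_diagonal_mul_apply hW1 a).trans_le (hlam a).2
  set r := fun m => ∑ b, (A ^ k) m b
  have hrow : ∑ b, (A ^ (k + 1)) i b = lam i * ∑ m, W i m * r m := by
    simp only [sum_pow_succ_apply, A, diagonal_mul, Finset.mul_sum, mul_assoc, r]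
  have havg : ∑ m, W i m * r m < 1 :=
    calc ∑ m, W i m * r m < ∑ m, W i m := Finset.sum_lt_sum
          (fun m _ => mul_le_of_le_one_right (hW0 i m) (sum_pow_apply_le_one hA0 hA1 k m))
          ⟨j, Finset.mem_univ j, mul_lt_of_lt_one_right hij hj⟩
      _ = 1 := hW1 i
  have hr0 : 0 ≤ ∑ m, W i m * r m :=
    Finset.sum_nonneg fun m _ => mul_nonneg (hW0 i m)
      (Finset.sum_nonneg fun b _ => pow_apply_nonneg hA0 k m b)
  rw [hrow]
  nlinarith [hlam i]

theorem exists_sum_diagonal_mul_pow_apply_lt_one (hW0 : ∀ i j, 0 ≤ W i j)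
    (hW1 : ∀ i, ∑ j, W i j = 1) (hlam : ∀ i, 0 ≤ lam i ∧ lam i ≤ 1) {i : ι}
    (hi : lam i < 1 ∨ ∃ j, lam j < 1 ∧ Relation.TransGen (fun a b => 0 < W a b) i j) :
    ∃ k, ∑ b, ((diagonal lam * W) ^ k) i b < 1 := by
  have hstubborn : ∀ j, lam j < 1 → ∑ b, ((diagonal lam * W) ^ 1) j b < 1 := fun j hj => by
    rwa [pow_one, sum_diagonal_mul_apply hW1]
  rcases hi with hi | ⟨j, hj, hij⟩
  · exact ⟨1, hstubborn i hi⟩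
  induction hij using Relation.TransGen.head_induction_on with
  | single hij =>
    exact ⟨2, sum_diagonal_mul_pow_succ_apply_lt_one hW0 hW1 hlam hij (hstubborn _ hj)⟩
  | head hia _ ih =>
    obtain ⟨k, hk⟩ := ih
    exact ⟨k + 1, sum_diagonal_mul_pow_succ_apply_lt_one hW0 hW1 hlam hia hk⟩

end FriedkinJohnsen

/-- the FJ model is exponentially stable, i.e. ρ(ΛW) < 1, iff there are no
oblivious agents: every agent is stubborn (λ_ii < 1) or connected by a walk in the
interaction graph G[W] (arc (i,j) iff w_ij > 0) to some stubborn agent. -/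
theorem fj_stability_iff_no_oblivious {n : ℕ} (W : Matrix (Fin n) (Fin n) ℝ)
    (lam : Fin n → ℝ)
    (hW0 : ∀ i j, 0 ≤ W i j) (hW1 : ∀ i, ∑ j, W i j = 1)
    (hlam : ∀ i, 0 ≤ lam i ∧ lam i ≤ 1) :
    specRad (Matrix.diagonal lam * W) < 1 ↔
      ∀ i : Fin n, lam i < 1 ∨
        ∃ j : Fin n, lam j < 1 ∧ Relation.TransGen (fun a b => 0 < W a b) i j := by
  have hA0 := diagonal_mul_apply_nonneg hW0 fun i => (hlam i).1
  rw [specRad_lt_one_iff]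
  constructor
  · intro hstable i
    by_contra! hobl
    simpa using hstable 1
      (one_mem_spectrum_of_oblivious hW0 hW1 (fun j => (hlam j).2) hobl.1 hobl.2)
  · intro hno z hz
    obtain ⟨k, hk⟩ := exists_forall_sum_pow_apply_lt_one hA0
      (fun i => (sum_diagonal_mul_apply hW1 i).trans_le (hlam i).2)
      fun i => exists_sum_diagonal_mul_pow_apply_lt_one hW0 hW1 hlam (hno i)
    refine norm_lt_one_of_mem_spectrum_map _ k (fun i => ?_) hz
    simpa only [abs_of_nonneg (pow_apply_nonneg hA0 k i _)] using hk i
end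

section
/- Let S ⊆ {1,…,n} be the set of agents that are stubborn or connected by a walk in G[W] to a stubborn agent (the non-oblivious agents). Then the principal submatrix of ΛW with rows and columns indexed by S is Schur stable, i.e. its spectral radius is strictly less than 1. -/
/-!
Let `A` be the principal submatrix of `ΛW` on the non-oblivious agents. It is nonnegative with
row sums at most `1`, the row of a stubborn agent sums to less than `1`, and a non-oblivious agent
that is not stubborn has `λ = 1`, so the arcs of its walk to a stubborn agent are positive entries
of `A`. A row-sum deficit propagates backwards along positive entries (if `0 < A i j` and row `j`
of `A ^ m` sums to less than `1`, so does row `i` of `A ^ (m + 1)`), and row sums of `A ^ m`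
decrease with `m`, so some `A ^ N` has all row sums below `1`. Then every eigenvalue `z` of `A`
satisfies `‖z‖ ^ N ≤ ‖A ^ N‖_∞ < 1`.
-/

open Relation

namespace Matrix

variable {ι : Type*} [Fintype ι] [DecidableEq ι]

open Norms.Operator in
theorem specRad_lt_one_of_rowSum_abs_pow_lt_one (A : Matrix ι ι ℝ) (N : ℕ)
    (h : ∀ i, ∑ j, |(A ^ N) i j| < 1) : specRad A < 1 := by
  set M := A.map (algebraMap ℝ ℂ)
  have hMN : ‖M ^ N‖₊ < 1 := by
    have hpow : M ^ N = (A ^ N).map (algebraMap ℝ ℂ) :=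
      (map_pow (algebraMap ℝ ℂ).mapMatrix A N).symm
    rw [linfty_opNNNorm_def, Finset.sup_lt_iff zero_lt_one]
    intro i _
    rw [← NNReal.coe_lt_coe, hpow]
    simpa using h i
  have hspec : ∀ z ∈ spectrum ℂ M, ‖z‖ < 1 := by
    intro z hz
    -- `‖1‖ = 1` for the `linfty` operator norm needs a nonempty index type
    have : Nonempty ι := by
      by_contra hι
      rw [not_nonempty_iff] at hι
      simp [spectrum.of_subsingleton] at hz
    have hzN : ‖z‖ ^ N < 1 := by
      rw [← norm_pow]
      exact (spectrum.norm_le_norm_of_mem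
        (spectrum.pow_image_subset M N ⟨z, hz, rfl⟩)).trans_lt hMN
    have hN : N ≠ 0 := by rintro rfl; simp at hzN
    exact (pow_lt_one_iff_of_nonneg (norm_nonneg z) hN).mp hzN
  change sSup ((fun z : ℂ => ‖z‖) '' spectrum ℂ M) < 1
  rcases (spectrum ℂ M).eq_empty_or_nonempty with hempty | hne
  · simp [hempty]
  · rw [Set.Finite.csSup_lt_iff ((finite_spectrum M).image _) (hne.image _)]
    simpa using hspec

theorem rowSum_pow_succ (A : Matrix ι ι ℝ) (m : ℕ) (i : ι) :
    ∑ j, (A ^ (m + 1)) i j = ∑ k, A i k * ∑ j, (A ^ m) k j := by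
  simp only [pow_succ', mul_apply, Finset.mul_sum]
  exact Finset.sum_comm

section Substochastic

variable {A : Matrix ι ι ℝ}

theorem rowSum_pow_le_one (h0 : ∀ i j, 0 ≤ A i j) (h1 : ∀ i, ∑ j, A i j ≤ 1) (m : ℕ) (i : ι) :
    ∑ j, (A ^ m) i j ≤ 1 := by
  induction m generalizing i with
  | zero => simp [one_apply]
  | succ m ih =>
    calc ∑ j, (A ^ (m + 1)) i j = ∑ k, A i k * ∑ j, (A ^ m) k j := rowSum_pow_succ A m i
      _ ≤ ∑ k, A i k := Finset.sum_le_sum fun k _ => mul_le_of_le_one_right (h0 i k) (ih k)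
      _ ≤ 1 := h1 i

theorem rowSum_pow_antitone (h0 : ∀ i j, 0 ≤ A i j) (h1 : ∀ i, ∑ j, A i j ≤ 1) (i : ι) :
    Antitone fun m => ∑ j, (A ^ m) i j := by
  suffices hstep : ∀ m i, ∑ j, (A ^ (m + 1)) i j ≤ ∑ j, (A ^ m) i j from
    antitone_nat_of_succ_le fun m => hstep m i
  intro m
  induction m with
  | zero => simpa [one_apply] using h1
  | succ m ih =>
    intro i
    rw [rowSum_pow_succ, rowSum_pow_succ A m]
    exact Finset.sum_le_sum fun k _ => mul_le_mul_of_nonneg_left (ih k) (h0 i k)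

theorem rowSum_pow_succ_lt_one (h0 : ∀ i j, 0 ≤ A i j) (h1 : ∀ i, ∑ j, A i j ≤ 1) {m : ℕ}
    {i j : ι} (hij : 0 < A i j) (hj : ∑ k, (A ^ m) j k < 1) : ∑ k, (A ^ (m + 1)) i k < 1 := by
  rw [rowSum_pow_succ]
  calc ∑ k, A i k * ∑ l, (A ^ m) k l < ∑ k, A i k :=
        Finset.sum_lt_sum
          (fun k _ => mul_le_of_le_one_right (h0 i k) (rowSum_pow_le_one h0 h1 m k))
          ⟨j, Finset.mem_univ j, mul_lt_of_lt_one_right hij hj⟩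
    _ ≤ 1 := h1 i

theorem exists_rowSum_pow_lt_one_of_reflTransGen (h0 : ∀ i j, 0 ≤ A i j)
    (h1 : ∀ i, ∑ j, A i j ≤ 1) {i j : ι}
    (hij : ReflTransGen (fun a b => 0 < A a b) i j) (hj : ∑ k, A j k < 1) :
    ∃ m, ∑ k, (A ^ m) i k < 1 := by
  induction hij using ReflTransGen.head_induction_on with
  | refl => exact ⟨1, by simpa using hj⟩
  | head hab _ ih =>
    obtain ⟨m, hm⟩ := ih
    exact ⟨m + 1, rowSum_pow_succ_lt_one h0 h1 hab hm⟩

theorem specRad_lt_one_of_forall_reflTransGen_rowSum_lt_one (h0 : ∀ i j, 0 ≤ A i j)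
    (h1 : ∀ i, ∑ j, A i j ≤ 1)
    (hreach : ∀ i, ∃ j, ReflTransGen (fun a b => 0 < A a b) i j ∧ ∑ k, A j k < 1) :
    specRad A < 1 := by
  choose m hm using fun i =>
    have ⟨_, hij, hj⟩ := hreach i
    exists_rowSum_pow_lt_one_of_reflTransGen h0 h1 hij hj
  let N := Finset.univ.sup m
  refine specRad_lt_one_of_rowSum_abs_pow_lt_one A N fun i => ?_
  simp only [abs_of_nonneg (pow_apply_nonneg h0 N i _)]
  exact (rowSum_pow_antitone h0 h1 i (Finset.le_sup (Finset.mem_univ i))).trans_lt (hm i)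

end Substochastic

omit [DecidableEq ι] in
theorem sum_submatrix_val_le_sum {A : Matrix ι ι ℝ} (h0 : ∀ i j, 0 ≤ A i j) (S : Set ι)
    [Fintype S] (a : S) : ∑ b : S, A.submatrix Subtype.val Subtype.val a b ≤ ∑ j, A a j :=
  calc ∑ b : S, A a b = ∑ j ∈ Finset.univ.map (Function.Embedding.subtype (· ∈ S)), A a j :=
        by rw [Finset.sum_map]; rfl
    _ ≤ ∑ j, A a j := Finset.sum_le_univ_sum_of_nonneg (h0 a)

end Matrix

section FriedkinJohnsen

variable {ι : Type*}

def nonobliviousAgents (W : Matrix ι ι ℝ) (lam : ι → ℝ) : Set ι :=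
  {i | ∃ j, lam j < 1 ∧ ReflTransGen (fun a b => 0 < W a b) i j}

theorem setOf_stubborn_or_transGen_eq_nonobliviousAgents (W : Matrix ι ι ℝ) (lam : ι → ℝ) :
    {i | lam i < 1 ∨ ∃ j, lam j < 1 ∧ TransGen (fun a b => 0 < W a b) i j} =
      nonobliviousAgents W lam := by
  ext i
  simp [nonobliviousAgents, reflTransGen_iff_eq_or_transGen, and_or_left, exists_or]

variable [Fintype ι] [DecidableEq ι] {W : Matrix ι ι ℝ} {lam : ι → ℝ}

open Matrix

theorem sum_submatrix_diagonal_mul_le (hW0 : ∀ i j, 0 ≤ W i j) (hW1 : ∀ i, ∑ j, W i j ≤ 1)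
    (hlam : ∀ i, 0 ≤ lam i) (S : Set ι) [Fintype S] (a : S) :
    ∑ b : S, (diagonal lam * W).submatrix Subtype.val Subtype.val a b ≤ lam a :=
  calc _ ≤ ∑ j, (diagonal lam * W) a j :=
        sum_submatrix_val_le_sum (fun i j => by simpa using mul_nonneg (hlam i) (hW0 i j)) S a
    _ = lam a * ∑ j, W a j := by simp [Finset.mul_sum]
    _ ≤ lam a := mul_le_of_le_one_right (hlam a) (hW1 a)

theorem exists_reflTransGen_rowSum_lt_one (hW0 : ∀ i j, 0 ≤ W i j) (hW1 : ∀ i, ∑ j, W i j ≤ 1)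
    (hlam : ∀ i, 0 ≤ lam i) [Fintype (nonobliviousAgents W lam)]
    (a : nonobliviousAgents W lam) :
    ∃ b : nonobliviousAgents W lam,
      ReflTransGen (fun a b => 0 < (diagonal lam * W).submatrix Subtype.val Subtype.val a b) a b ∧
        ∑ k : nonobliviousAgents W lam,
          (diagonal lam * W).submatrix Subtype.val Subtype.val b k < 1 := by
  set A : Matrix (nonobliviousAgents W lam) (nonobliviousAgents W lam) ℝ :=
    (diagonal lam * W).submatrix Subtype.val Subtype.val
  have stubborn (x : ι) (hx : x ∈ nonobliviousAgents W lam) (hlx : lam x < 1) :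
      ∃ b, ReflTransGen (fun a b => 0 < A a b) ⟨x, hx⟩ b ∧ ∑ k, A b k < 1 :=
    ⟨_, .refl, (sum_submatrix_diagonal_mul_le hW0 hW1 hlam _ _).trans_lt hlx⟩
  obtain ⟨x, hx⟩ := a
  obtain ⟨j, hj, hxj⟩ := id hx
  induction hxj using ReflTransGen.head_induction_on with
  | refl => exact stubborn j hx hj
  | @head x y hxy hyj ih =>
    by_cases hlx : lam x < 1
    · exact stubborn x hx hlx
    have hy : y ∈ nonobliviousAgents W lam := ⟨j, hj, hyj⟩
    obtain ⟨b, hyb, hb⟩ := ih hy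
    have hA : 0 < A ⟨x, hx⟩ ⟨y, hy⟩ := by
      simpa [A] using mul_pos (one_pos.trans_le (not_lt.mp hlx)) hxy
    exact ⟨b, .head hA hyb, hb⟩

end FriedkinJohnsen

open Classical in
/-- the principal submatrix of ΛW indexed by the set S of non-oblivious
agents (agents that are stubborn or connected by a walk in G[W] to a stubborn agent)
is Schur stable. -/
theorem fj_nonoblivious_submatrix_schur_stable {n : ℕ} (W : Matrix (Fin n) (Fin n) ℝ)
    (lam : Fin n → ℝ)
    (hW0 : ∀ i j, 0 ≤ W i j) (hW1 : ∀ i, ∑ j, W i j = 1)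
    (hlam : ∀ i, 0 ≤ lam i ∧ lam i ≤ 1)
    (S : Set (Fin n))
    (hS : S = {i : Fin n | lam i < 1 ∨
        ∃ j : Fin n, lam j < 1 ∧ Relation.TransGen (fun a b => 0 < W a b) i j}) :
    specRad ((Matrix.diagonal lam * W).submatrix
        (fun i : S => (i : Fin n)) (fun j : S => (j : Fin n))) < 1 := by
  obtain rfl : S = nonobliviousAgents W lam :=
    hS.trans (setOf_stubborn_or_transGen_eq_nonobliviousAgents W lam)
  have hW1' i : ∑ j, W i j ≤ 1 := (hW1 i).le
  have hlam0 i : 0 ≤ lam i := (hlam i).1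
  exact Matrix.specRad_lt_one_of_forall_reflTransGen_rowSum_lt_one
    (fun a b => by simpa using mul_nonneg (hlam0 a) (hW0 a b))
    (fun a => (sum_submatrix_diagonal_mul_le hW0 hW1' hlam0 _ a).trans (hlam a).2)
    (exists_reflTransGen_rowSum_lt_one hW0 hW1' hlam0)
end

section
/- If the interaction graph G[W] is strongly connected (every node is reachable by a walk from every other node) and Λ ≠ I_n (i.e., at least one agent i has λ_ii < 1), then the FJ model is stable: ρ(ΛW) < 1. -/
open Matrix in
/-- if the interaction graph G[W] is strongly connected and at least one agent
is stubborn (λ_ii < 1), then the FJ model is stable: ρ(ΛW) < 1. -/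
theorem fj_strongly_connected_stable {n : ℕ} (W : Matrix (Fin n) (Fin n) ℝ)
    (lam : Fin n → ℝ)
    (hW0 : ∀ i j, 0 ≤ W i j) (hW1 : ∀ i, ∑ j, W i j = 1)
    (hlam : ∀ i, 0 ≤ lam i ∧ lam i ≤ 1)
    (hconn : ∀ i j : Fin n, i ≠ j → Relation.TransGen (fun a b => 0 < W a b) i j)
    (hstub : ∃ i, lam i < 1) :
    specRad (Matrix.diagonal lam * W) < 1 := by
  classical
  set M : Matrix (Fin n) (Fin n) ℂ :=
    (Matrix.diagonal lam * W).map (algebraMap ℝ ℂ) with hMdef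
  have hMentry : ∀ i j, M i j = ((lam i * W i j : ℝ) : ℂ) := by
    intro i j
    simp [hMdef, Matrix.map_apply, Matrix.diagonal_mul, Complex.coe_algebraMap]
  -- every element of the spectrum has norm < 1
  have key : ∀ z ∈ spectrum ℂ M, ‖z‖ < 1 := by
    intro z hz
    by_contra hge
    push_neg at hge
    -- extract an eigenvector
    rw [spectrum.mem_iff, Matrix.isUnit_iff_isUnit_det, isUnit_iff_ne_zero, not_not] at hz
    obtain ⟨v, hv0, hveq⟩ := Matrix.exists_mulVec_eq_zero_iff.mpr hz
    have hMv : M *ᵥ v = z • v := by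
      have h1 : (algebraMap ℂ (Matrix (Fin n) (Fin n) ℂ) z) *ᵥ v = z • v := by
        rw [Algebra.algebraMap_eq_smul_one, Matrix.smul_mulVec, Matrix.one_mulVec]
      have h2 := hveq
      rw [Matrix.sub_mulVec, sub_eq_zero] at h2
      rw [← h2, h1]
    have heig : ∀ i, z * v i = ∑ j, M i j * v j := by
      intro i
      have := congrFun hMv i
      simp only [Matrix.mulVec, dotProduct, Pi.smul_apply, smul_eq_mul] at this
      exact this.symm
    -- maximizing index
    obtain ⟨istub, hstubi⟩ := hstub
    have hne : (Finset.univ : Finset (Fin n)).Nonempty := ⟨istub, Finset.mem_univ _⟩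
    obtain ⟨i0, -, hi0⟩ := Finset.exists_max_image Finset.univ (fun i => ‖v i‖) hne
    set m : ℝ := ‖v i0‖ with hmdef
    have hub : ∀ j, ‖v j‖ ≤ m := fun j => hi0 j (Finset.mem_univ j)
    have hmpos : 0 < m := by
      obtain ⟨k, hk⟩ := Function.ne_iff.mp hv0
      have : 0 < ‖v k‖ := norm_pos_iff.mpr hk
      exact lt_of_lt_of_le this (hub k)
    -- key propagation step
    have step : ∀ i, ‖v i‖ = m → lam i = 1 ∧ ∀ j, 0 < W i j → ‖v j‖ = m := by
      intro i hi
      have h1 : m ≤ ∑ j, (lam i * W i j) * ‖v j‖ := by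
        calc m = 1 * ‖v i‖ := by rw [hi, one_mul]
          _ ≤ ‖z‖ * ‖v i‖ := mul_le_mul_of_nonneg_right hge (norm_nonneg _)
          _ = ‖z * v i‖ := (norm_mul _ _).symm
          _ = ‖∑ j, M i j * v j‖ := by rw [heig i]
          _ ≤ ∑ j, ‖M i j * v j‖ := norm_sum_le _ _
          _ = ∑ j, (lam i * W i j) * ‖v j‖ := by
              refine Finset.sum_congr rfl fun j _ => ?_
              rw [norm_mul, hMentry i j, Complex.norm_real,
                Real.norm_of_nonneg (mul_nonneg (hlam i).1 (hW0 i j))]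
      have h2 : ∑ j, (lam i * W i j) * ‖v j‖ ≤ lam i * m := by
        calc ∑ j, (lam i * W i j) * ‖v j‖ ≤ ∑ j, (lam i * W i j) * m :=
              Finset.sum_le_sum fun j _ =>
                mul_le_mul_of_nonneg_left (hub j) (mul_nonneg (hlam i).1 (hW0 i j))
          _ = lam i * m := by
              rw [← Finset.sum_mul, ← Finset.mul_sum, hW1 i, mul_one]
      have h3 : lam i * m ≤ m := by nlinarith [(hlam i).2, hmpos]
      have hlam1 : lam i = 1 := by nlinarith
      have hSum : ∑ j, (lam i * W i j) * ‖v j‖ = m :=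
        le_antisymm (le_trans h2 (by rw [hlam1, one_mul])) h1
      rw [hlam1] at hSum
      simp only [one_mul] at hSum
      have hzero : ∑ j, W i j * (m - ‖v j‖) = 0 := by
        have : ∑ j, W i j * (m - ‖v j‖) = (∑ j, W i j) * m - ∑ j, W i j * ‖v j‖ := by
          rw [Finset.sum_mul]
          rw [← Finset.sum_sub_distrib]
          exact Finset.sum_congr rfl fun j _ => by ring
        rw [this, hW1 i, one_mul, hSum, sub_self]
      have hterm : ∀ j ∈ Finset.univ, W i j * (m - ‖v j‖) = 0 :=
        (Finset.sum_eq_zero_iff_of_nonneg fun j _ =>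
          mul_nonneg (hW0 i j) (sub_nonneg.mpr (hub j))).mp hzero
      refine ⟨hlam1, fun j hWij => ?_⟩
      rcases mul_eq_zero.mp (hterm j (Finset.mem_univ j)) with h | h
      · exact absurd h (ne_of_gt hWij)
      · linarith [sub_eq_zero.mp h]
    -- propagate along the strongly connected graph
    have reach : ∀ j, Relation.TransGen (fun a b => 0 < W a b) i0 j → ‖v j‖ = m := by
      intro j hj
      induction hj with
      | single h => exact (step i0 rfl).2 _ h
      | tail _ hbc ih => exact (step _ ih).2 _ hbc
    have hstub1 : lam istub = 1 := by
      by_cases h : i0 = istub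
      · exact (step istub (by rw [← h])).1
      · exact (step istub (reach istub (hconn i0 istub h))).1
    linarith
  -- conclude: sSup of the (finite) image set is < 1
  unfold specRad
  set S : Set ℝ := (fun z : ℂ => ‖z‖) '' spectrum ℂ M with hS
  have hfin : S.Finite := (Matrix.finite_spectrum M).image _
  rcases S.eq_empty_or_nonempty with h | h
  · rw [h, Real.sSup_empty]; norm_num
  · have hmem := h.csSup_mem hfin
    obtain ⟨z, hzmem, hzeq⟩ := hmem
    rw [← hzeq]
    exact key z hzmem
end

section
/- The FJ model x(k+1) = ΛW x(k) + (I_n − Λ)u is convergent (x(k) has a limit for every u ∈ ℝ^n) if and only if the matrix A = ΛW is regular, i.e. A_* = lim_{k→∞}(ΛW)^k exists. Moreover, when this holds, for every u the series Σ_{k=0}^∞ (ΛW)^k (I_n − Λ)u converges and the limit opinion decomposes as lim_{k→∞} x(k) = A_* u + Σ_{k=0}^∞ (ΛW)^k (I_n − Λ)u. -/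
/-!
Unrolling the recursion gives `x(k) = A^k u + ∑_{j<k} A^j (I - Λ) u` with `A = ΛW`. The series
always converges: `A` is nonnegative with row sums `λ_i ≤ 1`, the vector `(I - Λ) 1 = 1 - A 1` of
row deficits telescopes, `∑_{j<m} A^j (1 - A 1) = 1 - A^m 1 ≤ 1`, and `(I - Λ) u` is dominated
entrywise by `‖u‖ (1 - A 1)`. Hence `x(k)` converges iff `A^k u` does, and `A^k u` converges
for every `u` iff `A^k` converges (take `u` to be the standard basis vectors).
-/

open Filter Topology Finset

namespace Matrix

variable {ι R : Type*} [Fintype ι] [DecidableEq ι]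

theorem iterate_mulVec_add [Semiring R] (A : Matrix ι ι R) (b u : ι → R) (k : ℕ) :
    (fun x => A *ᵥ x + b)^[k] u = A ^ k *ᵥ u + ∑ j ∈ range k, A ^ j *ᵥ b := by
  induction k with
  | zero => simp
  | succ k ih =>
    rw [Function.iterate_succ_apply', ih, mulVec_add, mulVec_sum, sum_range_succ', pow_zero,
      one_mulVec, ← add_assoc]
    simp only [mulVec_mulVec, ← pow_succ']

theorem tendsto_iterate_mulVec_add_iff [Ring R] [TopologicalSpace R] [IsTopologicalAddGroup R]
    {A : Matrix ι ι R} {b s : ι → R} (hs : HasSum (fun k => A ^ k *ᵥ b) s) (u L : ι → R) :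
    Tendsto (fun k => (fun x => A *ᵥ x + b)^[k] u) atTop (𝓝 (L + s)) ↔
      Tendsto (fun k => A ^ k *ᵥ u) atTop (𝓝 L) := by
  simp_rw [iterate_mulVec_add]
  refine ⟨fun h => ?_, fun h => h.add hs.tendsto_sum_nat⟩
  simpa using h.sub hs.tendsto_sum_nat

theorem exists_tendsto_of_forall_exists_tendsto_mulVec {α m : Type*} [NonAssocSemiring R]
    [TopologicalSpace R] {M : α → Matrix m ι R} {l : Filter α}
    (h : ∀ v, ∃ w, Tendsto (fun a => M a *ᵥ v) l (𝓝 w)) : ∃ L, Tendsto M l (𝓝 L) := by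
  choose w hw using fun j => h (Pi.single j 1)
  refine ⟨of fun i j => w j i, tendsto_pi_nhds.2 fun i => tendsto_pi_nhds.2 fun j => ?_⟩
  simpa [mulVec_single_one] using tendsto_pi_nhds.1 (hw j) i

theorem summable_pow_mulVec_of_abs_le {A : Matrix ι ι ℝ} (hA : ∀ i j, 0 ≤ A i j)
    (hA1 : ∀ i, ∑ j, A i j ≤ 1) {b : ι → ℝ} {c : ℝ} (hb : ∀ j, |b j| ≤ c * (1 - ∑ l, A j l)) :
    Summable fun k => A ^ k *ᵥ b := by
  set d : ι → ℝ := (1 - A) *ᵥ 1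
  have hd : ∀ j, d j = 1 - ∑ l, A j l := fun j => by simp [d, sub_mulVec, mulVec, dotProduct]
  have hpow_d : ∀ k i, 0 ≤ (A ^ k *ᵥ d) i := fun k i =>
    sum_nonneg fun j _ => mul_nonneg (pow_apply_nonneg hA k i j) (by linarith [hd j, hA1 j])
  have hpartial : ∀ m, ∑ k ∈ range m, A ^ k *ᵥ d = 1 - A ^ m *ᵥ 1 := fun m => by
    rw [← sum_mulVec, mulVec_mulVec, geom_sum_mul_neg, sub_mulVec, one_mulVec]
  have hd_summable : Summable fun k => A ^ k *ᵥ d := by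
    refine Pi.summable.2 fun i => summable_of_sum_range_le (c := 1) (hpow_d · i) fun m => ?_
    have hAm : 0 ≤ (A ^ m *ᵥ 1) i :=
      sum_nonneg fun j _ => mul_nonneg (pow_apply_nonneg hA m i j) zero_le_one
    simp only [← Finset.sum_apply, hpartial, Pi.sub_apply, Pi.one_apply]
    linarith
  refine Pi.summable.2 fun i => ((Pi.summable.1 hd_summable i).mul_left c).of_norm_bounded
    fun k => ?_
  calc ‖(A ^ k *ᵥ b) i‖ ≤ ∑ j, (A ^ k) i j * |b j| := by
        refine (abs_sum_le_sum_abs _ _).trans_eq (sum_congr rfl fun j _ => ?_)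
        rw [abs_mul, abs_of_nonneg (pow_apply_nonneg hA k i j)]
    _ ≤ ∑ j, (A ^ k) i j * (c * d j) := by
        gcongr with j
        · exact pow_apply_nonneg hA k i j
        · rw [hd]; exact hb j
    _ = c * (A ^ k *ᵥ d) i := by
        simp only [mulVec, dotProduct, mul_sum]
        exact sum_congr rfl fun j _ => by ring

end Matrix

open Matrix

/-- the FJ model x(k+1) = ΛW x(k) + (I-Λ)u is convergent (x(k) has a limit
for every u) iff A = ΛW is regular (A_* = lim A^k exists); moreover, in this case, for
every u the series Σ (ΛW)^k (I-Λ)u converges and lim x(k) = A_* u + Σ (ΛW)^k (I-Λ)u. -/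
theorem fj_convergent_iff_regular {n : ℕ} (W : Matrix (Fin n) (Fin n) ℝ)
    (lam : Fin n → ℝ)
    (hW0 : ∀ i j, 0 ≤ W i j) (hW1 : ∀ i, ∑ j, W i j = 1)
    (hlam : ∀ i, 0 ≤ lam i ∧ lam i ≤ 1) :
    ((∀ u : Fin n → ℝ, ∃ L : Fin n → ℝ,
        Tendsto (fun k => (fun x => (Matrix.diagonal lam * W).mulVec x
            + (1 - Matrix.diagonal lam).mulVec u)^[k] u) atTop (nhds L)) ↔
      (∃ Astar : Matrix (Fin n) (Fin n) ℝ,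
        Tendsto (fun k => (Matrix.diagonal lam * W) ^ k) atTop (nhds Astar))) ∧
    (∀ Astar : Matrix (Fin n) (Fin n) ℝ,
      Tendsto (fun k => (Matrix.diagonal lam * W) ^ k) atTop (nhds Astar) →
      ∀ u : Fin n → ℝ, ∃ s : Fin n → ℝ,
        HasSum (fun k : ℕ => ((Matrix.diagonal lam * W) ^ k).mulVec
            ((1 - Matrix.diagonal lam).mulVec u)) s ∧
        Tendsto (fun k => (fun x => (Matrix.diagonal lam * W).mulVec x
            + (1 - Matrix.diagonal lam).mulVec u)^[k] u) atTop
          (nhds (Astar.mulVec u + s))) := by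
  set A := diagonal lam * W
  have hA0 : ∀ i j, 0 ≤ A i j := fun i j => by
    simpa [A] using mul_nonneg (hlam i).1 (hW0 i j)
  have hrow : ∀ i, ∑ j, A i j = lam i := fun i => by simp [A, ← mul_sum, hW1]
  have hsum : ∀ u, Summable fun k => A ^ k *ᵥ ((1 - diagonal lam) *ᵥ u) := fun u =>
    summable_pow_mulVec_of_abs_le hA0 (fun i => (hrow i).trans_le (hlam i).2) (c := ‖u‖)
      fun j => by
        have h1 : 0 ≤ 1 - lam j := sub_nonneg.2 (hlam j).2
        have hb : ((1 - diagonal lam) *ᵥ u) j = (1 - lam j) * u j := by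
          simp [sub_mulVec, mulVec_diagonal, sub_mul]
        rw [hb, hrow, abs_mul, abs_of_nonneg h1, mul_comm ‖u‖]
        exact mul_le_mul_of_nonneg_left (norm_le_pi_norm u j) h1
  have limit_of_regular : ∀ Astar, Tendsto (fun k => A ^ k) atTop (𝓝 Astar) → ∀ u, ∃ s,
      HasSum (fun k => A ^ k *ᵥ ((1 - diagonal lam) *ᵥ u)) s ∧
      Tendsto (fun k => (fun x => A *ᵥ x + (1 - diagonal lam) *ᵥ u)^[k] u) atTop
        (𝓝 (Astar *ᵥ u + s)) := fun Astar hAstar u =>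
    ⟨_, (hsum u).hasSum, (tendsto_iterate_mulVec_add_iff (hsum u).hasSum u _).2
      (((continuous_id.matrix_mulVec continuous_const).tendsto Astar).comp hAstar)⟩
  refine ⟨⟨fun hconv => exists_tendsto_of_forall_exists_tendsto_mulVec fun u => ?_,
    fun ⟨Astar, hAstar⟩ u => ?_⟩, limit_of_regular⟩
  · obtain ⟨L, hL⟩ := hconv u
    refine ⟨L - ∑' k, A ^ k *ᵥ ((1 - diagonal lam) *ᵥ u), ?_⟩
    rwa [← tendsto_iterate_mulVec_add_iff (hsum u).hasSum, sub_add_cancel]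
  · obtain ⟨s, -, hs⟩ := limit_of_regular Astar hAstar u
    exact ⟨_, hs⟩
end

section
/- Let C ∈ ℝ^{m×m}. The matrix ΛW ⊗ C is Schur stable if and only if ρ(ΛW)·ρ(C) < 1. If this holds, then for every u ∈ ℝ^{mn} the solution of x(k+1) = (ΛW ⊗ C) x(k) + ((I_n − Λ) ⊗ I_m) u with x(0) = u converges as k → ∞ to x'_C = (I_{mn} − ΛW ⊗ C)^{-1} ((I_n − Λ) ⊗ I_m) u. -/
open Filter Matrix Kronecker

/-! The eigenvalues of `A ⊗ₖ B` include all products of eigenvalues of `A` and of `B`, so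
`ρ(A) ρ(B) ≤ ρ(A ⊗ₖ B)`. Conversely `‖(A ⊗ₖ B) ^ k‖ ≤ ‖A ^ k‖ ‖B ^ k‖` for the ∞-operator norm,
and Gelfand's formula `ρ(M) = lim ‖M ^ k‖ ^ (1 / k)` turns this into `ρ(A ⊗ₖ B) ≤ ρ(A) ρ(B)`.
When `ρ(M) < 1`, Gelfand's formula also gives `M ^ k → 0`; hence `1 - M` is invertible and the
iterates `x + M ^ k (u - x)` of `y ↦ M y + b` converge to its fixed point `x = (1 - M)⁻¹ b`. -/

open scoped ENNReal NNReal Topology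

namespace spectrum

theorem spectralRadius_lt_top {𝕜 A : Type*} [NontriviallyNormedField 𝕜] [NormedRing A]
    [NormedAlgebra 𝕜 A] [CompleteSpace A] (a : A) : spectralRadius 𝕜 a < ⊤ := by
  refine lt_of_le_of_lt (iSup₂_le fun k hk => ?_) (ENNReal.coe_lt_top (r := ‖a‖₊ * ‖(1 : A)‖₊))
  exact_mod_cast norm_le_norm_mul_of_mem hk

variable {A : Type*} [NormedRing A] [NormedAlgebra ℂ A] [CompleteSpace A]

theorem tendsto_pow_atTop_nhds_zero_of_spectralRadius_lt_one {a : A}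
    (h : spectralRadius ℂ a < 1) : Tendsto (fun k : ℕ => a ^ k) atTop (𝓝 0) := by
  obtain ⟨r, hρr, hr1⟩ := ENNReal.lt_iff_exists_nnreal_btwn.mp h
  have hbound : ∀ᶠ k : ℕ in atTop, ‖a ^ k‖ ≤ r ^ k := by
    filter_upwards [(pow_nnnorm_pow_one_div_tendsto_nhds_spectralRadius a).eventually_lt_const hρr,
      eventually_ne_atTop 0] with k hk hk0
    rw [← ENNReal.coe_rpow_of_nonneg _ (by positivity), ENNReal.coe_lt_coe, one_div,
      NNReal.rpow_inv_lt_iff (by positivity), NNReal.rpow_natCast] at hk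
    exact_mod_cast hk.le
  exact squeeze_zero_norm' hbound
    (tendsto_pow_atTop_nhds_zero_of_lt_one r.coe_nonneg (by exact_mod_cast hr1))

variable {B C : Type*} [NormedRing B] [NormedAlgebra ℂ B] [CompleteSpace B]
  [NormedRing C] [NormedAlgebra ℂ C] [CompleteSpace C]

theorem spectralRadius_le_mul_of_nnnorm_pow_le {a : A} {b : B} {c : C}
    (h : ∀ k : ℕ, ‖c ^ k‖₊ ≤ ‖a ^ k‖₊ * ‖b ^ k‖₊) :
    spectralRadius ℂ c ≤ spectralRadius ℂ a * spectralRadius ℂ b := by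
  have hab : Tendsto (fun k : ℕ =>
      (‖a ^ k‖₊ : ℝ≥0∞) ^ (1 / (k : ℝ)) * (‖b ^ k‖₊ : ℝ≥0∞) ^ (1 / (k : ℝ)))
      atTop (𝓝 (spectralRadius ℂ a * spectralRadius ℂ b)) :=
    ENNReal.Tendsto.mul (pow_nnnorm_pow_one_div_tendsto_nhds_spectralRadius a)
      (.inr (spectralRadius_lt_top b).ne) (pow_nnnorm_pow_one_div_tendsto_nhds_spectralRadius b)
      (.inr (spectralRadius_lt_top a).ne)
  refine (spectralRadius_le_liminf_pow_nnnorm_pow_one_div ℂ c).trans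
    (le_of_le_of_eq (liminf_le_liminf (.of_forall fun k => ?_)) hab.liminf_eq)
  rw [← ENNReal.mul_rpow_of_nonneg _ _ (by positivity)]
  gcongr
  exact_mod_cast h k

end spectrum

attribute [local instance] Matrix.linftyOpSeminormedAddCommGroup Matrix.linftyOpNormedRing
  Matrix.linftyOpNormedAlgebra

namespace Matrix

variable {ι κ : Type*} [Fintype ι] [Fintype κ]

theorem linfty_opNNNorm_kronecker_le {l n α : Type*} [Fintype l] [Fintype n] [SeminormedRing α]
    (A : Matrix ι l α) (B : Matrix κ n α) : ‖A ⊗ₖ B‖₊ ≤ ‖A‖₊ * ‖B‖₊ := by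
  simp_rw [linfty_opNNNorm_def, NNReal.finset_sup_mul, NNReal.mul_finset_sup]
  refine Finset.sup_le fun ⟨i, k⟩ _ => ?_
  calc ∑ q : l × n, ‖(A ⊗ₖ B) (i, k) q‖₊
      ≤ ∑ q : l × n, ‖A i q.1‖₊ * ‖B k q.2‖₊ :=
        Finset.sum_le_sum fun q _ => nnnorm_mul_le _ _
    _ = (∑ j, ‖A i j‖₊) * ∑ j, ‖B k j‖₊ := by
        rw [Fintype.sum_prod_type, Finset.sum_mul_sum]
    _ ≤ _ := Finset.le_sup_of_le (Finset.mem_univ i)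
        (Finset.le_sup (f := fun k => (∑ j, ‖A i j‖₊) * ∑ j, ‖B k j‖₊) (Finset.mem_univ k))

variable [DecidableEq ι] [DecidableEq κ]

theorem kronecker_pow {α : Type*} [CommSemiring α] (A : Matrix ι ι α) (B : Matrix κ κ α) (k : ℕ) :
    (A ⊗ₖ B) ^ k = (A ^ k) ⊗ₖ (B ^ k) := by
  induction k with
  | zero => simp
  | succ k ih => rw [pow_succ, pow_succ, pow_succ, ih, mul_kronecker_mul]

theorem mem_spectrum_iff_exists_mulVec_eq_smul {K : Type*} [Field K] {P : Matrix ι ι K} {a : K} :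
    a ∈ spectrum K P ↔ ∃ v ≠ 0, P *ᵥ v = a • v := by
  rw [← spectrum_toLin', ← Module.End.hasEigenvalue_iff_mem_spectrum]
  constructor
  · intro h
    obtain ⟨v, hv, hv0⟩ := h.exists_hasEigenvector
    exact ⟨v, hv0, by simpa using Module.End.mem_eigenspace_iff.mp hv⟩
  · rintro ⟨v, hv0, hv⟩
    exact Module.End.hasEigenvalue_of_hasEigenvector
      ⟨Module.End.mem_eigenspace_iff.mpr (by simpa using hv), hv0⟩

theorem mul_mem_spectrum_kronecker {K : Type*} [Field K] {P : Matrix ι ι K} {Q : Matrix κ κ K}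
    {a b : K} (ha : a ∈ spectrum K P) (hb : b ∈ spectrum K Q) :
    a * b ∈ spectrum K (P ⊗ₖ Q) := by
  rw [mem_spectrum_iff_exists_mulVec_eq_smul] at ha hb ⊢
  obtain ⟨v, hv0, hv⟩ := ha
  obtain ⟨w, hw0, hw⟩ := hb
  obtain ⟨i₀, hi₀⟩ := Function.ne_iff.mp hv0
  obtain ⟨j₀, hj₀⟩ := Function.ne_iff.mp hw0
  refine ⟨fun p => v p.1 * w p.2, Function.ne_iff.mpr ⟨(i₀, j₀), mul_ne_zero hi₀ hj₀⟩, ?_⟩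
  ext ⟨i, j⟩
  have hvi := congrFun hv i
  have hwj := congrFun hw j
  simp only [mulVec, dotProduct, Pi.smul_apply, smul_eq_mul] at hvi hwj ⊢
  rw [Fintype.sum_prod_type]
  calc ∑ x, ∑ y, P i x * Q j y * (v x * w y) = (∑ x, P i x * v x) * ∑ y, Q j y * w y := by
        rw [Finset.sum_mul_sum]
        exact Finset.sum_congr rfl fun _ _ => Finset.sum_congr rfl fun _ _ => by ring
    _ = a * b * (v i * w j) := by rw [hvi, hwj]; ring

theorem spectralRadius_kronecker (P : Matrix ι ι ℂ) (Q : Matrix κ κ ℂ) :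
    spectralRadius ℂ (P ⊗ₖ Q) = spectralRadius ℂ P * spectralRadius ℂ Q := by
  refine le_antisymm (spectrum.spectralRadius_le_mul_of_nnnorm_pow_le fun k => ?_) ?_
  · rw [kronecker_pow]
    exact linfty_opNNNorm_kronecker_le _ _
  by_cases hP : (spectrum ℂ P).Nonempty
  · by_cases hQ : (spectrum ℂ Q).Nonempty
    · obtain ⟨a, ha, hPa⟩ := spectrum.exists_nnnorm_eq_spectralRadius_of_nonempty hP
      obtain ⟨b, hb, hQb⟩ := spectrum.exists_nnnorm_eq_spectralRadius_of_nonempty hQ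
      rw [← hPa, ← hQb, ← ENNReal.coe_mul, ← nnnorm_mul]
      exact le_iSup₂ (f := fun z (_ : z ∈ spectrum ℂ (P ⊗ₖ Q)) => (‖z‖₊ : ℝ≥0∞)) (a * b)
        (mul_mem_spectrum_kronecker ha hb)
    · simp [spectralRadius, Set.not_nonempty_iff_eq_empty.mp hQ]
  · simp [spectralRadius, Set.not_nonempty_iff_eq_empty.mp hP]

theorem isUnit_one_sub_of_tendsto_pow_nhds_zero {K : Type*} [Field K] [TopologicalSpace K]
    [IsTopologicalRing K] [T2Space K] {M : Matrix ι ι K}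
    (hM : Tendsto (fun k : ℕ => M ^ k) atTop (𝓝 0)) : IsUnit (1 - M) := by
  rw [isUnit_iff_isUnit_det, isUnit_iff_ne_zero]
  intro hdet
  obtain ⟨v, hv0, hv⟩ := exists_mulVec_eq_zero_iff.mpr hdet
  have hfix : ∀ k : ℕ, (M ^ k) *ᵥ v = v := by
    rw [sub_mulVec, one_mulVec, sub_eq_zero] at hv
    intro k
    induction k with
    | zero => simp
    | succ k ih => rw [pow_succ, ← mulVec_mulVec, ← hv, ih, hv]
  have hlim : Tendsto (fun k : ℕ => (M ^ k) *ᵥ v) atTop (𝓝 (0 *ᵥ v)) :=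
    ((continuous_id.matrix_mulVec continuous_const).tendsto 0).comp hM
  simp only [hfix, zero_mulVec] at hlim
  exact hv0 (tendsto_nhds_unique tendsto_const_nhds hlim)

theorem tendsto_iterate_mulVec_add {K : Type*} [Field K] [TopologicalSpace K]
    [IsTopologicalRing K] [T2Space K] {M : Matrix ι ι K}
    (hM : Tendsto (fun k : ℕ => M ^ k) atTop (𝓝 0)) (b x₀ : ι → K) :
    Tendsto (fun k => (fun x => M *ᵥ x + b)^[k] x₀) atTop (𝓝 ((1 - M)⁻¹ *ᵥ b)) := by
  have hdet : IsUnit (1 - M).det :=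
    (isUnit_iff_isUnit_det _).mp (isUnit_one_sub_of_tendsto_pow_nhds_zero hM)
  set x := (1 - M)⁻¹ *ᵥ b
  have hx : M *ᵥ x + b = x := by
    have : (1 - M) *ᵥ x = b := by rw [mulVec_mulVec, mul_nonsing_inv _ hdet, one_mulVec]
    rw [← this, sub_mulVec, one_mulVec]
    abel
  have hiter : ∀ k : ℕ, (fun x => M *ᵥ x + b)^[k] x₀ = x + (M ^ k) *ᵥ (x₀ - x) := by
    intro k
    induction k with
    | zero => simp
    | succ k ih =>
      rw [Function.iterate_succ_apply', ih, mulVec_add, mulVec_mulVec (x₀ - x) M, ← pow_succ',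
        add_right_comm, hx]
  have hlim : Tendsto (fun k : ℕ => (M ^ k) *ᵥ (x₀ - x)) atTop (𝓝 (0 *ᵥ (x₀ - x))) :=
    ((continuous_id.matrix_mulVec continuous_const).tendsto 0).comp hM
  simpa [hiter] using hlim.const_add x

end Matrix

section specRad

variable {ι κ : Type*} [Fintype ι] [DecidableEq ι] [Fintype κ] [DecidableEq κ]

theorem specRad_nonneg (A : Matrix ι ι ℝ) : 0 ≤ specRad A :=
  Real.sSup_nonneg (by rintro _ ⟨z, _, rfl⟩; exact norm_nonneg z)

theorem ofReal_specRad (A : Matrix ι ι ℝ) :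
    ENNReal.ofReal (specRad A) = spectralRadius ℂ (A.map (algebraMap ℝ ℂ)) := by
  by_cases h : (spectrum ℂ (A.map (algebraMap ℝ ℂ))).Nonempty
  · obtain ⟨z, hz, hzρ⟩ := spectrum.exists_nnnorm_eq_spectralRadius_of_nonempty h
    have hmax : IsGreatest ((fun z : ℂ => ‖z‖) '' spectrum ℂ (A.map (algebraMap ℝ ℂ))) ‖z‖ := by
      refine ⟨⟨z, hz, rfl⟩, ?_⟩
      rintro _ ⟨w, hw, rfl⟩
      have : (‖w‖₊ : ℝ≥0∞) ≤ ‖z‖₊ :=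
        hzρ ▸ le_iSup₂ (f := fun z (_ : z ∈ spectrum ℂ _) => (‖z‖₊ : ℝ≥0∞)) w hw
      exact_mod_cast this
    rw [specRad, hmax.csSup_eq, ← hzρ, ofReal_norm, enorm_eq_nnnorm]
  · rw [Set.not_nonempty_iff_eq_empty] at h
    rw [specRad, spectralRadius, h]
    simp

theorem specRad_kronecker (A : Matrix ι ι ℝ) (B : Matrix κ κ ℝ) :
    specRad (A ⊗ₖ B) = specRad A * specRad B := by
  rw [← ENNReal.ofReal_eq_ofReal_iff (specRad_nonneg _)
      (mul_nonneg (specRad_nonneg A) (specRad_nonneg B)),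
    ENNReal.ofReal_mul (specRad_nonneg A), ofReal_specRad, ofReal_specRad, ofReal_specRad,
    ← spectralRadius_kronecker]
  congr 1
  ext
  simp [kroneckerMap_apply]

theorem tendsto_pow_atTop_nhds_zero_of_specRad_lt_one {M : Matrix ι ι ℝ} (h : specRad M < 1) :
    Tendsto (fun k : ℕ => M ^ k) atTop (𝓝 0) := by
  have hC : Tendsto (fun k : ℕ => M.map (algebraMap ℝ ℂ) ^ k) atTop (𝓝 0) :=
    spectrum.tendsto_pow_atTop_nhds_zero_of_spectralRadius_lt_one
      (by rwa [← ofReal_specRad, ENNReal.ofReal_lt_one])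
  have hre : Continuous fun N : Matrix ι ι ℂ => N.map Complex.re :=
    continuous_id.matrix_map Complex.continuous_re
  have hM : ∀ k : ℕ, (M.map (algebraMap ℝ ℂ) ^ k).map Complex.re = M ^ k := by
    intro k
    rw [← RingHom.mapMatrix_apply, ← map_pow]
    ext
    simp
  simpa only [Function.comp_def, hM, Complex.zero_re, Matrix.map_zero] using
    (hre.tendsto 0).comp hC

end specRad

theorem fj_multidim_stability_general {n m : ℕ} (W : Matrix (Fin n) (Fin n) ℝ)
    (lam : Fin n → ℝ) (C : Matrix (Fin m) (Fin m) ℝ) :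
    (specRad ((Matrix.diagonal lam * W) ⊗ₖ C) < 1 ↔
      specRad (Matrix.diagonal lam * W) * specRad C < 1) ∧
    (specRad ((Matrix.diagonal lam * W) ⊗ₖ C) < 1 →
      ∀ u : Fin n × Fin m → ℝ,
        Tendsto (fun k => (fun x => ((Matrix.diagonal lam * W) ⊗ₖ C).mulVec x
            + (((1 - Matrix.diagonal lam) ⊗ₖ (1 : Matrix (Fin m) (Fin m) ℝ))).mulVec u)^[k] u)
          atTop
          (nhds ((1 - (Matrix.diagonal lam * W) ⊗ₖ C)⁻¹.mulVec
            (((1 - Matrix.diagonal lam) ⊗ₖ (1 : Matrix (Fin m) (Fin m) ℝ)).mulVec u)))) :=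
  ⟨by rw [specRad_kronecker], fun h u =>
    Matrix.tendsto_iterate_mulVec_add (tendsto_pow_atTop_nhds_zero_of_specRad_lt_one h) _ u⟩

/-- ΛW ⊗ C is Schur stable iff ρ(ΛW)·ρ(C) < 1; if this holds, the
multidimensional FJ dynamics x(k+1) = (ΛW ⊗ C)x(k) + ((I-Λ) ⊗ I)u, x(0) = u, converges
to x'_C = (I - ΛW ⊗ C)⁻¹ ((I-Λ) ⊗ I) u for every u. -/
theorem fj_multidim_stability {n m : ℕ} (W : Matrix (Fin n) (Fin n) ℝ)
    (lam : Fin n → ℝ) (C : Matrix (Fin m) (Fin m) ℝ)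
    (hW0 : ∀ i j, 0 ≤ W i j) (hW1 : ∀ i, ∑ j, W i j = 1)
    (hlam : ∀ i, 0 ≤ lam i ∧ lam i ≤ 1) :
    (specRad ((Matrix.diagonal lam * W) ⊗ₖ C) < 1 ↔
      specRad (Matrix.diagonal lam * W) * specRad C < 1) ∧
    (specRad ((Matrix.diagonal lam * W) ⊗ₖ C) < 1 →
      ∀ u : Fin n × Fin m → ℝ,
        Tendsto (fun k => (fun x => ((Matrix.diagonal lam * W) ⊗ₖ C).mulVec x
            + (((1 - Matrix.diagonal lam) ⊗ₖ (1 : Matrix (Fin m) (Fin m) ℝ))).mulVec u)^[k] u)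
          atTop
          (nhds ((1 - (Matrix.diagonal lam * W) ⊗ₖ C)⁻¹.mulVec
            (((1 - Matrix.diagonal lam) ⊗ₖ (1 : Matrix (Fin m) (Fin m) ℝ)).mulVec u)))) :=
  fj_multidim_stability_general W lam C
end

section
/- Every square row-substochastic matrix A with spectral radius ρ(A) = 1 admits a nonempty stochastic subset of indices, i.e. a nonempty set J ⊆ {1,…,n} such that Σ_{j∈J} a_ij = 1 for all i ∈ J. -/
/-- every row-substochastic matrix with spectral radius 1 admits a nonempty
stochastic subset of indices J, i.e. Σ_{j∈J} a_ij = 1 for all i ∈ J. -/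
theorem substochastic_rho_one_has_stochastic_subset {n : ℕ}
    (A : Matrix (Fin n) (Fin n) ℝ)
    (hA0 : ∀ i j, 0 ≤ A i j) (hA1 : ∀ i, ∑ j, A i j ≤ 1)
    (hrho : specRad A = 1) :
    ∃ J : Finset (Fin n), J.Nonempty ∧ ∀ i ∈ J, ∑ j ∈ J, A i j = 1 := by
  classical
  set M : Matrix (Fin n) (Fin n) ℂ := A.map (algebraMap ℝ ℂ) with hMdef
  -- n is positive, since otherwise the spectrum is empty and specRad = 0
  have hn : 0 < n := by
    rcases Nat.eq_zero_or_pos n with h0 | h; swap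
    · exact h
    exfalso
    subst h0
    have hsub : Subsingleton (Matrix (Fin 0) (Fin 0) ℂ) :=
      ⟨fun a b => by ext i j; exact i.elim0⟩
    have hspec : spectrum ℂ M = ∅ := by
      ext z
      simp only [Set.mem_empty_iff_false, iff_false]
      intro hz
      exact spectrum.mem_iff.mp hz (@isUnit_of_subsingleton _ _ hsub _)
    rw [specRad, hspec, Set.image_empty, Real.sSup_empty] at hrho
    norm_num at hrho
  haveI : Nonempty (Fin n) := Fin.pos_iff_nonempty.mp hn
  -- the spectrum is nonempty and finite, so the sup of moduli is attained
  have hne : (spectrum ℂ M).Nonempty :=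
    spectrum.nonempty_of_isAlgClosed_of_finiteDimensional ℂ M
  have hfin : ((fun z : ℂ => ‖z‖) '' spectrum ℂ M).Finite :=
    (Matrix.finite_spectrum M).image _
  have h1mem : (1 : ℝ) ∈ (fun z : ℂ => ‖z‖) '' spectrum ℂ M := by
    rw [← hrho, specRad]
    exact (hne.image _).csSup_mem hfin
  obtain ⟨lam, hlam, hnormlam⟩ := h1mem
  -- extract an eigenvector
  have hdet : (algebraMap ℂ (Matrix (Fin n) (Fin n) ℂ) lam - M).det = 0 := by
    have hnu := spectrum.mem_iff.mp hlam
    rw [Matrix.isUnit_iff_isUnit_det] at hnu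
    simpa [isUnit_iff_ne_zero, not_not] using hnu
  obtain ⟨v, hv0, hv⟩ := Matrix.exists_mulVec_eq_zero_iff.mpr hdet
  have heig : ∀ i, M.mulVec v i = lam * v i := by
    intro i
    have h := congrFun hv i
    rw [Algebra.algebraMap_eq_smul_one, Matrix.sub_mulVec, Matrix.smul_mulVec,
      Matrix.one_mulVec] at h
    have h' : lam * v i - M.mulVec v i = 0 := by simpa using h
    linear_combination -h'
  -- pick the index of maximal modulus
  obtain ⟨i0, hi0⟩ := Finite.exists_max fun i => ‖v i‖
  set m : ℝ := ‖v i0‖ with hmdef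
  have hmpos : 0 < m := by
    obtain ⟨j, hj⟩ := Function.ne_iff.mp hv0
    exact lt_of_lt_of_le (norm_pos_iff.mpr hj) (hi0 j)
  set J : Finset (Fin n) := Finset.univ.filter (fun i => ‖v i‖ = m) with hJdef
  have hi0J : i0 ∈ J := Finset.mem_filter.mpr ⟨Finset.mem_univ _, rfl⟩
  refine ⟨J, ⟨i0, hi0J⟩, ?_⟩
  intro i hiJ
  have hvi : ‖v i‖ = m := by simpa [hJdef] using hiJ
  -- the eigenvalue equation at row i
  have hrow : M.mulVec v i = ∑ j, (A i j : ℂ) * v j := by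
    simp [Matrix.mulVec, dotProduct, hMdef, Matrix.map_apply]
  have hSval : ‖∑ j, (A i j : ℂ) * v j‖ = m := by
    have hnl : ‖lam‖ = 1 := hnormlam
    rw [← hrow, heig i, norm_mul, hnl, one_mul, hvi]
  have hT1 : ‖∑ j, (A i j : ℂ) * v j‖ ≤ ∑ j, A i j * ‖v j‖ := by
    refine le_trans (norm_sum_le _ _) (le_of_eq ?_)
    refine Finset.sum_congr rfl fun j _ => ?_
    rw [norm_mul, Complex.norm_real, Real.norm_eq_abs, abs_of_nonneg (hA0 i j)]
  have hT12 : ∑ j, A i j * ‖v j‖ ≤ ∑ j, A i j * m :=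
    Finset.sum_le_sum fun j _ => mul_le_mul_of_nonneg_left (hi0 j) (hA0 i j)
  have hT2 : ∑ j, A i j * m ≤ m := by
    rw [← Finset.sum_mul]
    calc (∑ j, A i j) * m ≤ 1 * m :=
          mul_le_mul_of_nonneg_right (hA1 i) (le_of_lt hmpos)
      _ = m := one_mul m
  -- equality throughout
  have hE1 : ∑ j, A i j * ‖v j‖ = ∑ j, A i j * m := by
    have h1 : m ≤ ∑ j, A i j * ‖v j‖ := hSval ▸ hT1
    linarith
  have hE2 : ∑ j, A i j * m = m := by
    have h1 : m ≤ ∑ j, A i j * ‖v j‖ := hSval ▸ hT1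
    linarith
  -- the full row sum is 1
  have hrowsum : ∑ j, A i j = 1 := by
    have h : (∑ j, A i j) * m = 1 * m := by
      rw [one_mul, Finset.sum_mul]; exact hE2
    exact mul_right_cancel₀ (ne_of_gt hmpos) h
  -- termwise equality: A i j ‖v j‖ = A i j m for all j
  have hterm : ∀ j ∈ Finset.univ, A i j * ‖v j‖ = A i j * m :=
    (Finset.sum_eq_sum_iff_of_le
      (fun j _ => mul_le_mul_of_nonneg_left (hi0 j) (hA0 i j))).mp hE1
  -- entries outside J vanish
  have hzero : ∀ j, j ∉ J → A i j = 0 := by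
    intro j hj
    have hlt : ‖v j‖ < m := lt_of_le_of_ne (hi0 j) (by simpa [hJdef] using hj)
    have h := hterm j (Finset.mem_univ j)
    by_contra hne0
    have hApos : 0 < A i j := lt_of_le_of_ne (hA0 i j) (Ne.symm hne0)
    have := mul_lt_mul_of_pos_left hlt hApos
    linarith
  calc ∑ j ∈ J, A i j = ∑ j, A i j :=
        Finset.sum_subset (Finset.subset_univ J) (fun j _ hj => hzero j hj)
    _ = 1 := hrowsum
end

section
/- Let A ∈ ℝ^{n×n} be row-substochastic and let J_* denote its maximal stochastic subset of indices (the union of all stochastic subsets). Then: a_ij = 0 for all i ∈ J_* and j ∉ J_*; the principal submatrix of A indexed by J_* is row-stochastic (when J_* is nonempty); and the principal submatrix of A indexed by the complement {1,…,n} \ J_* is Schur stable, i.e. its spectral radius is strictly less than 1. -/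
attribute [local instance] Matrix.linftyOpNormedAddCommGroup Matrix.linftyOpNormedRing
  Matrix.linftyOpNormedAlgebra

open Finset in
private lemma specRad_lt_one_of_no_stochastic {ι : Type*} [Fintype ι] [DecidableEq ι]
    (B : Matrix ι ι ℝ) (h0 : ∀ i j, 0 ≤ B i j) (h1 : ∀ i, ∑ j, B i j ≤ 1)
    (hst : ∀ S : Finset ι, (∀ i ∈ S, ∑ j ∈ S, B i j = 1) → S = ∅) :
    specRad B < 1 := by
  classical
  -- entries of powers are nonnegative
  have hpow0 : ∀ m i j, 0 ≤ (B ^ m) i j := by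
    intro m
    induction m with
    | zero => intro i j; by_cases h : i = j <;> simp [Matrix.one_apply, h]
    | succ k ih =>
      intro i j
      rw [pow_succ, Matrix.mul_apply]
      exact Finset.sum_nonneg fun l _ => mul_nonneg (ih i l) (h0 l j)
  set r : ℕ → ι → ℝ := fun m i => ∑ j, (B ^ m) i j with hr
  have hrec : ∀ m i, r (m + 1) i = ∑ j, B i j * r m j := by
    intro m i
    simp only [hr]
    rw [pow_succ']
    simp only [Matrix.mul_apply]
    rw [Finset.sum_comm]
    simp [Finset.mul_sum]
  have hle1 : ∀ m i, r m i ≤ 1 := by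
    intro m
    induction m with
    | zero => intro i; simp [hr, Matrix.one_apply]
    | succ k ih =>
      intro i
      rw [hrec]
      calc ∑ j, B i j * r k j ≤ ∑ j, B i j * 1 := by
            refine Finset.sum_le_sum fun j _ => ?_
            exact mul_le_mul_of_nonneg_left (ih j) (h0 i j)
        _ ≤ 1 := by simpa using h1 i
  have hrnonneg : ∀ m i, 0 ≤ r m i := fun m i =>
    Finset.sum_nonneg fun j _ => hpow0 m i j
  have hmono : ∀ m i, r (m + 1) i ≤ r m i := by
    intro m
    induction m with
    | zero =>
      intro i
      have h0' : r 0 i = 1 := by simp [hr, Matrix.one_apply]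
      rw [h0']; exact hle1 1 i
    | succ k ih =>
      intro i
      rw [hrec, hrec]
      exact Finset.sum_le_sum fun j _ => mul_le_mul_of_nonneg_left (ih j) (h0 i j)
  set S : ℕ → Finset ι := fun m => Finset.univ.filter (fun i => r m i = 1) with hS
  -- the key step
  have hstep : ∀ m i, i ∈ S (m + 1) → i ∈ S m ∧ ∑ j ∈ S m, B i j = 1 := by
    intro m i hi
    have hi1 : r (m + 1) i = 1 := (Finset.mem_filter.mp hi).2
    have hsum1 : ∑ j, B i j * r m j = 1 := by rw [← hrec]; exact hi1
    have hub : ∑ j, B i j * r m j ≤ ∑ j, B i j :=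
      Finset.sum_le_sum fun j _ => by
        simpa using mul_le_mul_of_nonneg_left (hle1 m j) (h0 i j)
    have hrow1 : ∑ j, B i j = 1 := le_antisymm (h1 i) (by linarith)
    have hzero : ∀ j ∈ Finset.univ, B i j * (1 - r m j) = 0 := by
      rw [← Finset.sum_eq_zero_iff_of_nonneg
        (fun j _ => mul_nonneg (h0 i j) (by linarith [hle1 m j]))]
      have : ∑ j, B i j * (1 - r m j) = (∑ j, B i j) - ∑ j, B i j * r m j := by
        rw [← Finset.sum_sub_distrib]
        congr 1; ext j; ring
      rw [this, hrow1, hsum1]; ring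
    have himem : i ∈ S m := by
      refine Finset.mem_filter.mpr ⟨Finset.mem_univ i, le_antisymm (hle1 m i) ?_⟩
      calc (1 : ℝ) = r (m + 1) i := hi1.symm
        _ ≤ r m i := hmono m i
    refine ⟨himem, ?_⟩
    have : ∑ j ∈ Finset.univ.filter (fun j => r m j = 1), B i j = ∑ j, B i j := by
      refine Finset.sum_filter_of_ne fun j _ hBij => ?_
      by_contra hne
      have hlt : r m j < 1 := lt_of_le_of_ne (hle1 m j) hne
      have := hzero j (Finset.mem_univ j)
      have : B i j = 0 := by
        rcases mul_eq_zero.mp this with h | h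
        · exact h
        · exfalso; linarith
      exact hBij this
    rw [hS]; rw [this, hrow1]
  have hSsub : ∀ m, S (m + 1) ⊆ S m := fun m i hi => (hstep m i hi).1
  have hfix : ∀ m, S (m + 1) = S m → S m = ∅ := by
    intro m h
    refine hst (S m) fun i hi => ?_
    exact (hstep m i (h ▸ hi)).2
  have hchain : ∀ m, S (m + 1) = ∅ ∨ (S (m + 1)).card + m ≤ (S 1).card := by
    intro m
    induction m with
    | zero => right; simp
    | succ k ih =>
      rcases ih with h | h
      · left
        exact Finset.subset_empty.mp (h ▸ hSsub (k + 1))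
      · by_cases heq : S (k + 1 + 1) = S (k + 1)
        · left
          rw [heq]; exact hfix (k + 1) heq
        · right
          have hlt : (S (k + 1 + 1)).card < (S (k + 1)).card :=
            Finset.card_lt_card (Finset.ssubset_iff_subset_ne.mpr ⟨hSsub (k + 1), heq⟩)
          omega
  have hSempty : S ((S 1).card + 1) = ∅ := by
    rcases hchain ((S 1).card) with h | h
    · exact h
    · exact Finset.card_eq_zero.mp (by omega)
  set m := (S 1).card + 1 with hm
  have hrlt : ∀ i, r m i < 1 := by
    intro i
    refine lt_of_le_of_ne (hle1 m i) fun h => ?_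
    have : i ∈ S m := Finset.mem_filter.mpr ⟨Finset.mem_univ i, h⟩
    rw [hSempty] at this
    exact absurd this (Finset.notMem_empty i)
  -- the mapped matrix and its norm
  set C : Matrix ι ι ℂ := B.map (algebraMap ℝ ℂ) with hC
  have hCpow : C ^ m = (B ^ m).map (algebraMap ℝ ℂ) := by
    rw [hC, ← RingHom.mapMatrix_apply, ← RingHom.mapMatrix_apply, ← map_pow]
  set t : ℝ := ‖C ^ m‖ with ht
  have ht0 : 0 ≤ t := norm_nonneg _
  have htlt : t < 1 := by
    have : ‖C ^ m‖₊ < 1 := by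
      rw [hCpow, Matrix.linfty_opNNNorm_def]
      refine (Finset.sup_lt_iff (by norm_num)).mpr fun i _ => ?_
      have hcast : ((∑ j, ‖((B ^ m).map (algebraMap ℝ ℂ)) i j‖₊ : NNReal) : ℝ) = r m i := by
        push_cast
        refine Finset.sum_congr rfl fun j _ => ?_
        simp only [Matrix.map_apply, Complex.coe_algebraMap, Complex.norm_real]
        exact abs_of_nonneg (hpow0 m i j)
      have : ((∑ j, ‖((B ^ m).map (algebraMap ℝ ℂ)) i j‖₊ : NNReal) : ℝ) < 1 := by
        rw [hcast]; exact hrlt i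
      exact_mod_cast this
    calc t = ((‖C ^ m‖₊ : NNReal) : ℝ) := rfl
      _ < 1 := by exact_mod_cast this
  have hone : ‖(1 : Matrix ι ι ℂ)‖ ≤ 1 := by
    have h : ‖(1 : Matrix ι ι ℂ)‖₊ ≤ 1 := by
      rw [Matrix.linfty_opNNNorm_def]
      refine Finset.sup_le fun i _ => ?_
      simp [Matrix.one_apply, apply_ite (‖·‖₊ : ℂ → NNReal)]
    exact_mod_cast h
  -- bound on spectrum elements
  have hmpos : (0 : ℝ) < (m : ℝ) := by
    have h' : 0 < m := by rw [hm]; exact Nat.succ_pos _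
    exact_mod_cast h'
  have hmne : (m : ℝ) ≠ 0 := ne_of_gt hmpos
  have hminv : (0 : ℝ) < (m : ℝ)⁻¹ := inv_pos.mpr hmpos
  set c : ℝ := t ^ ((m : ℝ)⁻¹) with hc
  have hc0 : 0 ≤ c := Real.rpow_nonneg ht0 _
  have hclt : c < 1 := Real.rpow_lt_one ht0 htlt hminv
  have hbound : ∀ x ∈ (fun z : ℂ => ‖z‖) '' spectrum ℂ C, x ≤ c := by
    rintro x ⟨z, hz, rfl⟩
    have hzm : z ^ m ∈ spectrum ℂ (C ^ m) :=
      spectrum.pow_image_subset C m ⟨z, hz, rfl⟩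
    have h1' : ‖z ^ m‖ ≤ ‖C ^ m‖ * ‖(1 : Matrix ι ι ℂ)‖ :=
      spectrum.norm_le_norm_mul_of_mem hzm
    have h2' : ‖z‖ ^ m ≤ t := by
      rw [← norm_pow]
      calc ‖z ^ m‖ ≤ ‖C ^ m‖ * ‖(1 : Matrix ι ι ℂ)‖ := h1'
        _ ≤ t * 1 := by
            exact mul_le_mul_of_nonneg_left hone (norm_nonneg _)
        _ = t := mul_one t
    have : (‖z‖ ^ m : ℝ) ^ ((m : ℝ)⁻¹) ≤ c :=
      Real.rpow_le_rpow (pow_nonneg (norm_nonneg z) m) h2' (le_of_lt hminv)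
    calc ‖z‖ = ((‖z‖ ^ m : ℝ)) ^ ((m : ℝ)⁻¹) := by
          rw [← Real.rpow_natCast ‖z‖ m, ← Real.rpow_mul (norm_nonneg z)]
          rw [mul_inv_cancel₀ hmne, Real.rpow_one]
      _ ≤ c := this
  have hsr : specRad B = sSup ((fun z : ℂ => ‖z‖) '' spectrum ℂ C) := by
    rw [specRad, hC]
  rw [hsr]
  exact lt_of_le_of_lt (Real.sSup_le hbound hc0) hclt

/-- let J_* be the maximal stochastic subset of indices of a
row-substochastic matrix A. Then a_ij = 0 for i ∈ J_*, j ∉ J_*; the principal submatrix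
indexed by J_* is row-stochastic (when J_* ≠ ∅); and the principal submatrix indexed by
the complement of J_* is Schur stable. -/
theorem substochastic_maximal_decomposition {n : ℕ}
    (A : Matrix (Fin n) (Fin n) ℝ)
    (hA0 : ∀ i j, 0 ≤ A i j) (hA1 : ∀ i, ∑ j, A i j ≤ 1)
    (Jstar : Finset (Fin n))
    (hJstar : ∀ i ∈ Jstar, ∑ j ∈ Jstar, A i j = 1)
    (hJmax : ∀ J : Finset (Fin n), (∀ i ∈ J, ∑ j ∈ J, A i j = 1) → J ⊆ Jstar) :
    (∀ i ∈ Jstar, ∀ j ∉ Jstar, A i j = 0) ∧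
    (Jstar.Nonempty →
      ∀ i : {x : Fin n // x ∈ Jstar},
        (∀ p q : {x : Fin n // x ∈ Jstar},
            0 ≤ A.submatrix (fun a : {x : Fin n // x ∈ Jstar} => (a : Fin n))
              (fun a : {x : Fin n // x ∈ Jstar} => (a : Fin n)) p q) ∧
        ∑ j : {x : Fin n // x ∈ Jstar},
          A.submatrix (fun a : {x : Fin n // x ∈ Jstar} => (a : Fin n))
            (fun a : {x : Fin n // x ∈ Jstar} => (a : Fin n)) i j = 1) ∧
    specRad (A.submatrix (fun a : {x : Fin n // x ∉ Jstar} => (a : Fin n))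
        (fun a : {x : Fin n // x ∉ Jstar} => (a : Fin n))) < 1 := by
  classical
  refine ⟨?_, ?_, ?_⟩
  · intro i hi j hj
    have htot := hA1 i
    rw [← Finset.sum_add_sum_compl Jstar] at htot
    have hcompl : ∑ k ∈ Jstarᶜ, A i k ≤ 0 := by
      have := hJstar i hi; linarith
    have hz : ∑ k ∈ Jstarᶜ, A i k = 0 :=
      le_antisymm hcompl (Finset.sum_nonneg fun k _ => hA0 i k)
    exact (Finset.sum_eq_zero_iff_of_nonneg (fun k _ => hA0 i k)).mp hz j
      (Finset.mem_compl.mpr hj)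
  · intro _ i
    refine ⟨fun p q => hA0 _ _, ?_⟩
    have : ∑ j : {x : Fin n // x ∈ Jstar}, A (i : Fin n) (j : Fin n)
        = ∑ j ∈ Jstar, A (i : Fin n) j := Finset.sum_coe_sort Jstar _
    simpa [Matrix.submatrix_apply] using this.trans (hJstar i i.2)
  · apply specRad_lt_one_of_no_stochastic
    · intro i j; exact hA0 _ _
    · intro i
      have : ∑ j : {x : Fin n // x ∉ Jstar}, A (i : Fin n) (j : Fin n)
          = ∑ j ∈ Jstarᶜ, A (i : Fin n) j := by
        rw [Finset.sum_subtype Jstarᶜ (fun x => Finset.mem_compl) (fun j => A (i : Fin n) j)]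
      calc ∑ j : {x : Fin n // x ∉ Jstar},
            A.submatrix (fun a : {x : Fin n // x ∉ Jstar} => (a : Fin n))
              (fun a : {x : Fin n // x ∉ Jstar} => (a : Fin n)) i j
          = ∑ j ∈ Jstarᶜ, A (i : Fin n) j := this
        _ ≤ ∑ j, A (i : Fin n) j :=
            Finset.sum_le_sum_of_subset_of_nonneg (Finset.subset_univ _)
              (fun j _ _ => hA0 _ j)
        _ ≤ 1 := hA1 _
    · intro S hSsum
      set T : Finset (Fin n) := S.image Subtype.val with hT
      have hTstoch : ∀ i ∈ T, ∑ j ∈ T, A i j = 1 := by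
        intro i hi
        obtain ⟨i', hi', rfl⟩ := Finset.mem_image.mp hi
        have : ∑ j ∈ T, A (i' : Fin n) j = ∑ j ∈ S, A (i' : Fin n) (j : Fin n) := by
          rw [hT]
          exact Finset.sum_image fun a _ b _ h => Subtype.ext h
        rw [this]
        simpa [Matrix.submatrix_apply] using hSsum i' hi'
      have hTsub := hJmax T hTstoch
      rw [Finset.eq_empty_iff_forall_notMem]
      intro i hi
      exact i.2 (hTsub (Finset.mem_image.mpr ⟨i, hi, rfl⟩))
end

section
/- Let W ∈ ℝ^{n×n} be row-stochastic and Λ = diag(λ_11,…,λ_nn) with 0 ≤ λ_ii ≤ 1, so that ΛW is row-substochastic. Then the maximal stochastic subset of indices J_* of the matrix ΛW is exactly the set of oblivious agents: j ∈ J_* if and only if agent j is neither stubborn (λ_jj < 1) nor connected by a walk in the interaction graph G[W] to a stubborn agent. -/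
/-- for the row-substochastic matrix ΛW (W row-stochastic, Λ = diag(λ) with
0 ≤ λ_ii ≤ 1), the maximal stochastic subset of indices J_* is exactly the set of oblivious
agents: j ∈ J_* iff agent j is neither stubborn (λ_jj < 1) nor connected by a walk in the
interaction graph G[W] to a stubborn agent. -/
theorem fj_maximal_stochastic_subset_is_oblivious {n : ℕ}
    (W : Matrix (Fin n) (Fin n) ℝ) (lam : Fin n → ℝ)
    (hW0 : ∀ i j, 0 ≤ W i j) (hW1 : ∀ i, ∑ j, W i j = 1)
    (hlam : ∀ i, 0 ≤ lam i ∧ lam i ≤ 1)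
    (Jstar : Finset (Fin n))
    (hJstar : ∀ i ∈ Jstar, ∑ j ∈ Jstar, (Matrix.diagonal lam * W) i j = 1)
    (hJmax : ∀ J : Finset (Fin n),
      (∀ i ∈ J, ∑ j ∈ J, (Matrix.diagonal lam * W) i j = 1) → J ⊆ Jstar) :
    ∀ j : Fin n, j ∈ Jstar ↔
      ¬ (lam j < 1 ∨ ∃ i : Fin n, lam i < 1 ∧
          Relation.TransGen (fun a b => 0 < W a b) j i) := by
  classical
  set r : Fin n → Fin n → Prop := fun a b => 0 < W a b with hr
  have hA : ∀ i j, (Matrix.diagonal lam * W) i j = lam i * W i j := by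
    intro i j; simp [Matrix.mul_apply, Matrix.diagonal]
  -- a sum over a subset with full sum 1 forces zero outside
  have hzero : ∀ (S : Finset (Fin n)) (i : Fin n), (∑ j ∈ S, W i j = 1) →
      ∀ k, k ∉ S → W i k = 0 := by
    intro S i hS k hk
    by_contra hne
    have hpos : 0 < W i k := lt_of_le_of_ne (hW0 i k) (Ne.symm hne)
    have h1 : ∑ j ∈ insert k S, W i j ≤ 1 := by
      rw [← hW1 i]
      exact Finset.sum_le_sum_of_subset_of_nonneg (Finset.subset_univ _)
        (fun j _ _ => hW0 i j)
    rw [Finset.sum_insert hk, hS] at h1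
    linarith
  -- facts about Jstar: lam = 1 and row sums of W over Jstar equal 1
  have hlam1 : ∀ i ∈ Jstar, lam i = 1 ∧ ∑ j ∈ Jstar, W i j = 1 := by
    intro i hi
    have h1 := hJstar i hi
    have hS1 : ∑ j ∈ Jstar, W i j ≤ 1 := by
      rw [← hW1 i]
      exact Finset.sum_le_sum_of_subset_of_nonneg (Finset.subset_univ _)
        (fun j _ _ => hW0 i j)
    have hfac : ∑ j ∈ Jstar, (Matrix.diagonal lam * W) i j
        = lam i * ∑ j ∈ Jstar, W i j := by
      rw [Finset.mul_sum]; exact Finset.sum_congr rfl fun j _ => hA i j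
    rw [hfac] at h1
    have hle : lam i * ∑ j ∈ Jstar, W i j ≤ lam i :=
      mul_le_of_le_one_right (hlam i).1 hS1
    have hlge : (1:ℝ) ≤ lam i := h1 ▸ hle
    have hlameq : lam i = 1 := le_antisymm (hlam i).2 hlge
    refine ⟨hlameq, ?_⟩
    rw [hlameq, one_mul] at h1
    exact h1
  -- Jstar is closed under one step of r
  have hstep : ∀ i ∈ Jstar, ∀ k, r i k → k ∈ Jstar := by
    intro i hi k hik
    by_contra hk
    have h0 := hzero Jstar i (hlam1 i hi).2 k hk
    have hpos : 0 < W i k := hik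
    linarith
  -- Jstar is closed under TransGen
  have hclosed : ∀ j ∈ Jstar, ∀ i, Relation.TransGen r j i → i ∈ Jstar := by
    intro j hj i hji
    induction hji with
    | single h => exact hstep j hj _ h
    | tail _ h ih => exact hstep _ ih _ h
  intro j
  constructor
  · intro hj hcon
    rcases hcon with h1 | ⟨i, hi1, hji⟩
    · exact absurd (hlam1 j hj).1 (ne_of_lt h1)
    · exact absurd (hlam1 i (hclosed j hj i hji)).1 (ne_of_lt hi1)
  · intro h
    push_neg at h
    obtain ⟨hj1, hreach⟩ := h
    have hj1' : lam j = 1 := le_antisymm (hlam j).2 hj1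
    -- the set of oblivious agents
    set P : Fin n → Prop := fun a => lam a = 1 ∧ ∀ i, Relation.TransGen r a i → lam i = 1
      with hP
    set O : Finset (Fin n) := Finset.univ.filter P with hO
    have hjO : j ∈ O := by
      refine Finset.mem_filter.mpr ⟨Finset.mem_univ _, hj1', fun i hji => ?_⟩
      exact le_antisymm (hlam i).2 (le_of_not_gt fun h => hreach i h hji)
    -- O is closed under one step of r
    have hOstep : ∀ a, P a → ∀ k, r a k → P k := by
      intro a ha k hak
      refine ⟨ha.2 k (Relation.TransGen.single hak), fun m hkm => ?_⟩
      exact ha.2 m (Relation.TransGen.head hak hkm)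
    -- O is a stochastic subset
    have hOstoch : ∀ i ∈ O, ∑ k ∈ O, (Matrix.diagonal lam * W) i k = 1 := by
      intro i hi
      have hPi : P i := (Finset.mem_filter.mp hi).2
      have hsum : ∑ k ∈ O, W i k = 1 := by
        rw [← hW1 i]
        apply Finset.sum_subset (Finset.subset_univ _)
        intro k _ hk
        by_contra hne
        have hpos : 0 < W i k := lt_of_le_of_ne (hW0 i k) (Ne.symm hne)
        exact hk (Finset.mem_filter.mpr ⟨Finset.mem_univ _, hOstep i hPi k hpos⟩)
      calc ∑ k ∈ O, (Matrix.diagonal lam * W) i k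
          = ∑ k ∈ O, lam i * W i k := Finset.sum_congr rfl fun k _ => hA i k
        _ = lam i * ∑ k ∈ O, W i k := (Finset.mul_sum _ _ _).symm
        _ = 1 := by rw [hPi.1, hsum, one_mul]
    exact hJmax O hOstoch hjO
end
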